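/- arXiv:2108.08177 — 2 statements merged into one kernel-verified Lean document; each statement's English description precedes it below -/
import Mathlib

section
/- Let n ≥ 5 be an integer and let S ⊆ V(Q_n) with |S| = 2^{n−1} and Type(S) > 2^{n−3}. Then θ(n,S) ≥ 3·2^{n−2}. -/
open Finset

/-- Two vertices of the hypercube `Q_n` are adjacent iff they differ in exactly one
coordinate. -/
def cubeEdge {n : ℕ} (u v : Fin n → Bool) : Prop :=
  (Finset.univ.filter (fun i => u i ≠ v i)).card = 1

instance {n : ℕ} (u v : Fin n → Bool) : Decidable (cubeEdge u v) := by
  unfold cubeEdge; infer_instance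

/-- `θ(n,S)`: the number of edges of `Q_n` with exactly one endpoint in `S`. -/
def edgeBoundary (n : ℕ) (S : Finset (Fin n → Bool)) : ℕ :=
  (Finset.univ.filter (fun p : (Fin n → Bool) × (Fin n → Bool) =>
    p.1 ∈ S ∧ p.2 ∉ S ∧ cubeEdge p.1 p.2)).card

/-- `θ(n,k) = min {θ(n,S) : S ⊆ V(Q_n), |S| = k}`. -/
noncomputable def thetaMin (n k : ℕ) : ℕ :=
  sInf {m | ∃ S : Finset (Fin n → Bool), S.card = k ∧ edgeBoundary n S = m}

/-- The half plane `{x : x_i = a}` of `Q_n`. -/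
def halfPlane (n : ℕ) (i : Fin n) (a : Bool) : Finset (Fin n → Bool) :=
  Finset.univ.filter (fun x => x i = a)

/-- `Type(S) = min_H |S ∩ H|`, minimum over the `2n` half planes of `Q_n`. -/
noncomputable def typeOf (n : ℕ) (S : Finset (Fin n → Bool)) : ℕ :=
  sInf {m | ∃ (i : Fin n) (a : Bool), (S ∩ halfPlane n i a).card = m}

/-- `θ(n,k,t) = min {θ(n,S) : |S| = k, Type(S) = t}`. -/
noncomputable def thetaMinType (n k t : ℕ) : ℕ :=
  sInf {m | ∃ S : Finset (Fin n → Bool),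
    S.card = k ∧ typeOf n S = t ∧ edgeBoundary n S = m}

/-- Graph distance on the cycle `C_m` with vertices labelled by naturals. -/
def cycleDist (m a b : ℕ) : ℕ := min (Nat.dist a b) (m - Nat.dist a b)

/-- The wirelength of an embedding `η` of `Q_n` into the cycle `C_{2^n}`:
the sum of cycle distances over all (unordered) edges of `Q_n`.  (The sum over
ordered pairs counts every edge twice, whence the division by `2`.) -/
def wirelength (n : ℕ) (η : (Fin n → Bool) → ℕ) : ℕ :=
  ((Finset.univ.filter (fun p : (Fin n → Bool) × (Fin n → Bool) =>
    cubeEdge p.1 p.2)).sum (fun p => cycleDist (2^n) (η p.1) (η p.2))) / 2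

/-- The reflected Gray code embedding `ξ_n(x) = (y)_2 + 1`, where
`y_i = (x_1 + ⋯ + x_i) mod 2`. -/
def xi (n : ℕ) (x : Fin n → Bool) : ℕ :=
  (Finset.univ.sum (fun i : Fin n =>
    ((Finset.univ.filter (fun j : Fin n => j ≤ i ∧ x j = true)).card % 2)
      * 2 ^ (n - 1 - (i : ℕ)))) + 1

/-- `f(x) = 3/4 − (64/7)(x − 1/2)²`. -/
noncomputable def fGuu (x : ℝ) : ℝ := 3/4 - 64/7 * (x - 1/2)^2

/-- `takDelta i` is `Δ_{i+1}`: `Δ_1(x) = 1/2 − |x − 1/2|`,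
`Δ_{n}(x) = (1/2)Δ_{n−1}(2x − ⌊2x⌋)`. -/
noncomputable def takDelta : ℕ → ℝ → ℝ
  | 0, x => 1/2 - |x - 1/2|
  | n+1, x => takDelta n (2*x - (⌊2*x⌋ : ℝ)) / 2

/-- `m_n(x) = Σ_{i=1}^n Δ_i(x)`, the n-th partial sum of the Takagi function. -/
noncomputable def mTakagi (n : ℕ) (x : ℝ) : ℝ := ∑ i ∈ Finset.range n, takDelta i x

/-- `y_N = ⌈2^N/24⌉ / 2^N`. -/
noncomputable def yGuu (N : ℕ) : ℝ := (⌈(2^N : ℝ)/24⌉ : ℝ) / 2^N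

/-- `p_N = 1/2 − y_N`. -/
noncomputable def pGuu (N : ℕ) : ℝ := 1/2 - yGuu N

/-- `g_{n,i,a}^{-1}(S)`, where `g_{n,i,a}` inserts the letter `a` at position `i`. -/
def gPre (n : ℕ) (i : Fin (n+1)) (a : Bool) (S : Finset (Fin (n+1) → Bool)) :
    Finset (Fin n → Bool) :=
  Finset.univ.filter (fun x => i.insertNth a x ∈ S)


/-!
Let `t = |S ∩ H|` for a thinnest half plane `H = {x_i = a}`, so `2^(n-3) < t ≤ 2^(n-2)`.

If `3t < 2^(n-1)`, slice `Q_n` along coordinate `i`. The slice on the side of `H` has `t` points and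
the other has `2^(n-1) - t`, i.e. its complement in `Q_(n-1)` has `t` points. Harper's inequality
`(n-1) k ≤ θ(X) + 2 E(k)` for `|X| = k`, where `E(k)` counts the binary ones of `0, …, k-1`,
bounds the boundary of each slice below by `t + 2^(n-3)` as long as `t ≤ 3·2^(n-4)`; the
`2^(n-1) - 2t` points of the larger slice without a partner add as many edges in direction `i`.

Otherwise every coordinate is balanced: `|D_i| ≤ 2^n / 6` for the imbalance `D_i` of `S` in
direction `i`. Parseval for the Walsh expansion of the indicator of `S` gives
`4|S|(2^n - |S|) ≤ 2^n θ(S) + 2 Σ D_i²`, since every character except the constant one and the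
`n` dictators has weight at least `2` in the total influence `Σ_T |T| f̂(T)² = 2^(n-1) θ(S)`.
Together with `D_i² ≤ |D_i| θ_i(S)`, where `θ_i(S)` counts the boundary edges in direction `i`,
this gives `θ(S) ≥ (3/4) 2^n`.
-/

def bitCount (k : ℕ) : ℕ := (Nat.digits 2 k).sum

/-- The maximal number of edges of a hypercube spanned by `k` of its vertices (Harper). -/
def totalBitCount (k : ℕ) : ℕ := ∑ i ∈ range k, bitCount i

lemma bitCount_two_mul (k : ℕ) : bitCount (2 * k) = bitCount k := by
  rcases k.eq_zero_or_pos with rfl | hk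
  · rfl
  · simp [bitCount, Nat.digits_def' one_lt_two (by omega : 0 < 2 * k)]

lemma bitCount_two_mul_add_one (k : ℕ) : bitCount (2 * k + 1) = bitCount k + 1 := by
  rw [bitCount, Nat.digits_def' one_lt_two (by omega), show (2 * k + 1) / 2 = k by omega]
  simp [bitCount, add_comm]

lemma totalBitCount_succ (k : ℕ) : totalBitCount (k + 1) = totalBitCount k + bitCount k :=
  sum_range_succ _ _

lemma totalBitCount_two_mul (k : ℕ) : totalBitCount (2 * k) = 2 * totalBitCount k + k := by
  induction k with
  | zero => rfl
  | succ k ih =>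
    rw [mul_add_one, totalBitCount_succ, totalBitCount_succ, ih, totalBitCount_succ,
      bitCount_two_mul, bitCount_two_mul_add_one]
    ring

lemma totalBitCount_two_mul_add_one (k : ℕ) :
    totalBitCount (2 * k + 1) = totalBitCount k + totalBitCount (k + 1) + k := by
  rw [totalBitCount_succ, totalBitCount_two_mul, bitCount_two_mul, totalBitCount_succ]
  ring

lemma totalBitCount_add_min_le (a b : ℕ) :
    totalBitCount a + totalBitCount b + min a b ≤ totalBitCount (a + b) := by
  induction h : a + b using Nat.strong_induction_on generalizing a b with
  | _ s ih =>
  subst h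
  rcases Nat.eq_zero_or_pos a with rfl | ha
  · simp [totalBitCount]
  rcases Nat.eq_zero_or_pos b with rfl | hb
  · simp [totalBitCount]
  obtain ⟨α, rfl | rfl⟩ := Nat.even_or_odd' a <;>
    obtain ⟨β, rfl | rfl⟩ := Nat.even_or_odd' b
  · have := ih (α + β) (by omega) α β rfl
    rw [← mul_add, totalBitCount_two_mul, totalBitCount_two_mul, totalBitCount_two_mul]
    omega
  · have h₁ := ih (α + β) (by omega) α β rfl
    have h₂ := ih (α + (β + 1)) (by omega) α (β + 1) rfl
    rw [show 2 * α + (2 * β + 1) = 2 * (α + β) + 1 by ring, totalBitCount_two_mul_add_one,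
      totalBitCount_two_mul, totalBitCount_two_mul_add_one]
    rw [← add_assoc] at h₂
    omega
  · have h₁ := ih (α + β) (by omega) α β rfl
    have h₂ := ih (α + 1 + β) (by omega) (α + 1) β rfl
    rw [show 2 * α + 1 + 2 * β = 2 * (α + β) + 1 by ring, totalBitCount_two_mul_add_one,
      totalBitCount_two_mul, totalBitCount_two_mul_add_one]
    rw [show α + 1 + β = α + β + 1 by ring] at h₂
    omega
  · have h₁ := ih (α + (β + 1)) (by omega) α (β + 1) rfl
    have h₂ := ih (α + 1 + β) (by omega) (α + 1) β rfl
    rw [show 2 * α + 1 + (2 * β + 1) = 2 * (α + β + 1) by ring, totalBitCount_two_mul,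
      totalBitCount_two_mul_add_one, totalBitCount_two_mul_add_one]
    rw [← add_assoc] at h₁
    rw [show α + 1 + β = α + β + 1 by ring] at h₂
    omega

lemma two_mul_totalBitCount_two_pow (p : ℕ) : 2 * totalBitCount (2 ^ p) = p * 2 ^ p := by
  induction p with
  | zero => rfl
  | succ p ih => rw [pow_succ', totalBitCount_two_mul]; grind

lemma totalBitCount_two_pow_add {p r : ℕ} (hr : r ≤ 2 ^ p) :
    totalBitCount (2 ^ p + r) = totalBitCount (2 ^ p) + r + totalBitCount r := by
  induction p generalizing r with
  | zero =>
    interval_cases r <;> rfl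
  | succ p ih =>
    rw [pow_succ'] at hr ⊢
    obtain ⟨ρ, rfl | rfl⟩ := Nat.even_or_odd' r
    · rw [← mul_add, totalBitCount_two_mul, totalBitCount_two_mul, totalBitCount_two_mul,
        ih (by omega)]
      ring
    · rw [show 2 * 2 ^ p + (2 * ρ + 1) = 2 * (2 ^ p + ρ) + 1 by ring,
        totalBitCount_two_mul_add_one, totalBitCount_two_mul_add_one, totalBitCount_two_mul,
        ih (by omega), add_assoc (2 ^ p) ρ 1, ih (by omega)]
      ring

lemma two_mul_totalBitCount_le {j r : ℕ} (hr : r ≤ 2 ^ j) : 2 * totalBitCount r ≤ j * r := by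
  induction j generalizing r with
  | zero => interval_cases r <;> simp [totalBitCount, bitCount]
  | succ j ih =>
    rw [pow_succ'] at hr
    obtain ⟨ρ, rfl | rfl⟩ := Nat.even_or_odd' r
    · have := ih (r := ρ) (by omega)
      rw [totalBitCount_two_mul]
      nlinarith
    · have h₁ := ih (r := ρ) (by omega)
      have h₂ := ih (r := ρ + 1) (by omega)
      rw [totalBitCount_two_mul_add_one]
      nlinarith

lemma two_mul_totalBitCount_le_of_two_pow_le {p t : ℕ} (ht : 2 ^ p ≤ t)
    (ht' : 2 * t ≤ 3 * 2 ^ p) :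
    2 * totalBitCount t + 2 ^ p ≤ (p + 1) * t := by
  rcases p with _ | j
  · obtain rfl : t = 1 := by simp at ht ht'; omega
    rfl
  obtain ⟨r, rfl⟩ := Nat.exists_eq_add_of_le ht
  have hr : r ≤ 2 ^ j := by rw [pow_succ] at ht'; omega
  have := two_mul_totalBitCount_le hr
  have := two_mul_totalBitCount_two_pow (j + 1)
  rw [totalBitCount_two_pow_add (by rw [pow_succ]; omega)]
  nlinarith

section Cube

variable {n : ℕ}

def flipAt (i : Fin n) (x : Fin n → Bool) : Fin n → Bool := Function.update x i (!x i)

@[simp] lemma flipAt_apply_self (i : Fin n) (x : Fin n → Bool) : flipAt i x i = !x i := by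
  simp [flipAt]

lemma flipAt_apply_of_ne {i j : Fin n} (x : Fin n → Bool) (h : j ≠ i) : flipAt i x j = x j := by
  simp [flipAt, h]

@[simp] lemma flipAt_flipAt (i : Fin n) (x : Fin n → Bool) : flipAt i (flipAt i x) = x := by
  simp [flipAt]

lemma flipAt_left_injective (x : Fin n → Bool) : Function.Injective (flipAt · x) := by
  intro i j h
  by_contra hij
  simpa [flipAt_apply_of_ne x hij] using congrFun h i

lemma cubeEdge_iff_exists_flipAt {x y : Fin n → Bool} :
    cubeEdge x y ↔ ∃ i, y = flipAt i x := by
  unfold cubeEdge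
  rw [card_eq_one]
  refine exists_congr fun i => ⟨fun h => ?_, fun h => ?_⟩
  · funext j
    have hj := Finset.ext_iff.mp h j
    by_cases hji : j = i
    · subst hji
      simp only [mem_filter, mem_univ, true_and, mem_singleton, iff_true] at hj
      rw [flipAt_apply_self]
      exact Bool.eq_not_iff.mpr (Ne.symm hj)
    · simpa [flipAt_apply_of_ne x hji, hji, eq_comm] using hj
  · ext j
    by_cases hji : j = i
    · simp [h, hji]
    · simp [h, flipAt_apply_of_ne x hji, hji]

lemma cubeEdge_comm {x y : Fin n → Bool} : cubeEdge x y ↔ cubeEdge y x := by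
  simp only [cubeEdge, ne_comm]

def dirBoundary (S : Finset (Fin n → Bool)) (i : Fin n) : ℕ :=
  #{x | x ∈ S ∧ flipAt i x ∉ S}

lemma edgeBoundary_eq_sum_dirBoundary (S : Finset (Fin n → Bool)) :
    edgeBoundary n S = ∑ i, dirBoundary S i := by
  simp only [dirBoundary, ← card_sigma]
  symm
  refine card_bij (fun p _ => (p.2, flipAt p.1 p.2)) ?_ ?_ ?_
  · rintro ⟨i, x⟩ h
    simp only [mem_sigma, mem_filter, mem_univ, true_and] at h ⊢
    exact ⟨h.1, h.2, cubeEdge_iff_exists_flipAt.mpr ⟨i, rfl⟩⟩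
  · rintro ⟨i, x⟩ - ⟨j, y⟩ - h
    simp only [Prod.mk.injEq] at h
    obtain ⟨rfl, h⟩ := h
    rw [flipAt_left_injective x h]
  · rintro ⟨x, y⟩ h
    simp only [mem_filter, mem_univ, true_and] at h
    obtain ⟨i, rfl⟩ := cubeEdge_iff_exists_flipAt.mp h.2.2
    exact ⟨⟨i, x⟩, by simpa using ⟨h.1, h.2.1⟩, rfl⟩

lemma edgeBoundary_compl (S : Finset (Fin n → Bool)) :
    edgeBoundary n Sᶜ = edgeBoundary n S := by
  refine card_nbij' Prod.swap Prod.swap ?_ ?_ (fun _ _ => rfl) (fun _ _ => rfl)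
  all_goals
    rintro ⟨x, y⟩ h
    simp only [coe_filter, Set.mem_ofPred_eq, mem_univ, true_and, mem_compl, not_not,
      Prod.fst_swap, Prod.snd_swap] at h ⊢
    exact ⟨h.2.1, h.1, cubeEdge_comm.mp h.2.2⟩

lemma inter_halfPlane_eq_filter (S : Finset (Fin n → Bool)) (i : Fin n) (a : Bool) :
    S ∩ halfPlane n i a = {x ∈ S | x i = a} := by
  ext x; simp [halfPlane]

lemma card_inter_halfPlane_add (S : Finset (Fin n → Bool)) (i : Fin n) :
    #(S ∩ halfPlane n i false) + #(S ∩ halfPlane n i true) = #S := by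
  rw [inter_halfPlane_eq_filter, inter_halfPlane_eq_filter,
    ← card_filter_add_card_filter_not (s := S) (· i = false)]
  simp

lemma typeOf_le (S : Finset (Fin n → Bool)) (i : Fin n) (a : Bool) :
    typeOf n S ≤ #(S ∩ halfPlane n i a) :=
  Nat.sInf_le ⟨i, a, rfl⟩

end Cube

section Slices

variable {m : ℕ}

lemma card_filter_eq_sum_insertNth (i : Fin (m + 1)) (P : (Fin (m + 1) → Bool) → Prop)
    [DecidablePred P] : #{x | P x} = ∑ a : Bool, #{y : Fin m → Bool | P (i.insertNth a y)} := by
  simp only [card_filter]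
  rw [← (Fin.insertNthEquiv (fun _ => Bool) i).sum_comp, Fintype.sum_prod_type]
  rfl

lemma card_gPre (i : Fin (m + 1)) (a : Bool) (S : Finset (Fin (m + 1) → Bool)) :
    #(gPre m i a S) = #(S ∩ halfPlane (m + 1) i a) := by
  rw [inter_halfPlane_eq_filter, ← filter_univ_mem S, filter_filter,
    card_filter_eq_sum_insertNth i, Fintype.sum_bool]
  cases a <;> simp [gPre]

lemma flipAt_insertNth_self (i : Fin (m + 1)) (a : Bool) (y : Fin m → Bool) :
    flipAt i (i.insertNth a y) = i.insertNth (!a) y := by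
  ext j
  rcases Fin.eq_self_or_eq_succAbove i j with rfl | ⟨k, rfl⟩
  · simp
  · simp [flipAt_apply_of_ne _ (Fin.succAbove_ne i k)]

lemma flipAt_succAbove_insertNth (i : Fin (m + 1)) (k : Fin m) (a : Bool) (y : Fin m → Bool) :
    flipAt (i.succAbove k) (i.insertNth a y) = i.insertNth a (flipAt k y) := by
  ext j
  rcases Fin.eq_self_or_eq_succAbove i j with rfl | ⟨l, rfl⟩
  · simp [flipAt_apply_of_ne _ (Fin.succAbove_ne _ k).symm]
  · rcases eq_or_ne l k with rfl | hlk
    · simp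
    · simp [flipAt_apply_of_ne _ hlk, flipAt_apply_of_ne _ (Fin.succAbove_right_injective.ne hlk)]

lemma dirBoundary_self (i : Fin (m + 1)) (S : Finset (Fin (m + 1) → Bool)) :
    dirBoundary S i = ∑ a : Bool, #(gPre m i a S \ gPre m i (!a) S) := by
  rw [dirBoundary, card_filter_eq_sum_insertNth i]
  congr! 2 with a
  ext y
  simp [gPre, flipAt_insertNth_self]

lemma dirBoundary_succAbove (i : Fin (m + 1)) (k : Fin m) (S : Finset (Fin (m + 1) → Bool)) :
    dirBoundary S (i.succAbove k) = ∑ a : Bool, dirBoundary (gPre m i a S) k := by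
  rw [dirBoundary, card_filter_eq_sum_insertNth i]
  refine sum_congr rfl fun a _ => congrArg card ?_
  ext y
  simp [gPre, flipAt_succAbove_insertNth]

lemma edgeBoundary_succ (i : Fin (m + 1)) (S : Finset (Fin (m + 1) → Bool)) :
    edgeBoundary (m + 1) S =
      ∑ a : Bool, (edgeBoundary m (gPre m i a S) + #(gPre m i a S \ gPre m i (!a) S)) := by
  simp only [edgeBoundary_eq_sum_dirBoundary, Fin.sum_univ_succAbove _ i, dirBoundary_succAbove]
  rw [dirBoundary_self, sum_add_distrib, sum_comm, add_comm]

lemma edgeBoundary_gPre_add_le (i : Fin (m + 1)) (a : Bool) (S : Finset (Fin (m + 1) → Bool)) :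
    edgeBoundary m (gPre m i a S) + edgeBoundary m (gPre m i (!a) S)
      + (#(gPre m i (!a) S) - #(gPre m i a S)) ≤ edgeBoundary (m + 1) S := by
  have := le_card_sdiff (gPre m i a S) (gPre m i (!a) S)
  rw [edgeBoundary_succ i]
  cases a <;> simp only [Fintype.sum_bool, Bool.not_true, Bool.not_false] at this ⊢ <;> omega

end Slices

theorem mul_card_le_edgeBoundary_add_two_mul_totalBitCount (m : ℕ) (X : Finset (Fin m → Bool)) :
    m * #X ≤ edgeBoundary m X + 2 * totalBitCount #X := by
  induction m with
  | zero => simp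
  | succ m ih =>
    set A := gPre m 0 false X
    set B := gPre m 0 true X
    have hX : #A + #B = #X := by
      rw [card_gPre, card_gPre, card_inter_halfPlane_add]
    have hA : edgeBoundary m A + edgeBoundary m B + (#B - #A) ≤ edgeBoundary (m + 1) X :=
      edgeBoundary_gPre_add_le 0 false X
    have hB : edgeBoundary m B + edgeBoundary m A + (#A - #B) ≤ edgeBoundary (m + 1) X :=
      edgeBoundary_gPre_add_le 0 true X
    have hE := totalBitCount_add_min_le #A #B
    have := ih A
    have := ih B
    rw [← hX, add_one_mul, mul_add]
    omega

theorem three_mul_two_pow_le_edgeBoundary_of_thin_halfPlane (p : ℕ)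
    (S : Finset (Fin (p + 3) → Bool)) (hS : #S = 2 ^ (p + 2)) (i : Fin (p + 3)) (a : Bool)
    (ht : 2 ^ p ≤ #(S ∩ halfPlane (p + 3) i a))
    (ht' : 2 * #(S ∩ halfPlane (p + 3) i a) ≤ 3 * 2 ^ p) :
    3 * 2 ^ (p + 1) ≤ edgeBoundary (p + 3) S := by
  set t := #(S ∩ halfPlane (p + 3) i a)
  set A := gPre (p + 2) i a S
  set B := gPre (p + 2) i (!a) S
  have hA : #A = t := card_gPre i a S
  have hB : #B + t = 2 ^ (p + 2) := by
    have : #B = #(S ∩ halfPlane (p + 3) i (!a)) := card_gPre i (!a) S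
    have := card_inter_halfPlane_add S i
    cases a <;> simp only [Bool.not_false, Bool.not_true] at * <;> omega
  have hBc : #Bᶜ = t := by
    rw [card_compl, Fintype.card_fun, Fintype.card_bool, Fintype.card_fin]
    omega
  have hHA := mul_card_le_edgeBoundary_add_two_mul_totalBitCount (p + 2) A
  have hHB := mul_card_le_edgeBoundary_add_two_mul_totalBitCount (p + 2) Bᶜ
  rw [hA] at hHA
  rw [hBc, edgeBoundary_compl] at hHB
  have hE := two_mul_totalBitCount_le_of_two_pow_le ht ht'
  have hslice : edgeBoundary (p + 2) A + edgeBoundary (p + 2) B + (#B - #A) ≤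
      edgeBoundary (p + 3) S := edgeBoundary_gPre_add_le i a S
  have : (p + 2) * t = (p + 1) * t + t := by ring
  have : 2 ^ (p + 2) = 4 * 2 ^ p := by ring
  rw [pow_succ]
  omega

section Walsh

variable {n : ℕ}

def walsh (T : Finset (Fin n)) (x : Fin n → Bool) : ℤ := ∏ i ∈ T, if x i then -1 else 1

def walshCoeff (g : (Fin n → Bool) → ℤ) (T : Finset (Fin n)) : ℤ := ∑ x, g x * walsh T x

lemma sum_walsh_mul_walsh (x y : Fin n → Bool) :
    ∑ T, walsh T x * walsh T y = if x = y then 2 ^ n else 0 := by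
  have h : ∀ i, 1 + (if x i then -1 else 1) * (if y i then -1 else 1) =
      if x i = y i then (2 : ℤ) else 0 := by
    intro i; cases x i <;> cases y i <;> norm_num
  simp only [walsh, ← prod_mul_distrib]
  rw [← powerset_univ, ← prod_one_add, Finset.prod_congr rfl fun i _ => h i, prod_ite_zero]
  simp [funext_iff]

theorem sum_sq_walshCoeff (g : (Fin n → Bool) → ℤ) :
    ∑ T, walshCoeff g T ^ 2 = 2 ^ n * ∑ x, g x ^ 2 := by
  calc ∑ T, walshCoeff g T ^ 2
      = ∑ x, ∑ y, g x * g y * ∑ T, walsh T x * walsh T y := by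
        simp only [walshCoeff, sq, sum_mul_sum]
        simp only [mul_sum]
        rw [sum_comm]
        refine sum_congr rfl fun x _ => ?_
        rw [sum_comm]
        exact sum_congr rfl fun y _ => sum_congr rfl fun T _ => by ring
    _ = 2 ^ n * ∑ x, g x ^ 2 := by
        simp [sum_walsh_mul_walsh, mul_sum, sq, mul_comm]

lemma walsh_flipAt (T : Finset (Fin n)) (i : Fin n) (x : Fin n → Bool) :
    walsh T (flipAt i x) = (if i ∈ T then -1 else 1) * walsh T x := by
  unfold walsh
  split_ifs with hi
  · rw [← mul_prod_erase T _ hi, ← mul_prod_erase T _ hi, flipAt_apply_self,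
      prod_congr rfl fun j hj => by rw [flipAt_apply_of_ne x (ne_of_mem_erase hj)]]
    cases x i <;> simp
  · rw [one_mul]
    exact prod_congr rfl fun j hj => by rw [flipAt_apply_of_ne x (ne_of_mem_of_not_mem hj hi)]

lemma sum_comp_flipAt {M : Type*} [AddCommMonoid M] (i : Fin n) (f : (Fin n → Bool) → M) :
    ∑ x, f (flipAt i x) = ∑ x, f x :=
  Equiv.sum_comp (Function.Involutive.toPerm _ (flipAt_flipAt i)) f

lemma walshCoeff_sub_flipAt (g : (Fin n → Bool) → ℤ) (i : Fin n) (T : Finset (Fin n)) :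
    walshCoeff (fun x => g x - g (flipAt i x)) T = if i ∈ T then 2 * walshCoeff g T else 0 := by
  have hflip : ∑ x, g (flipAt i x) * walsh T x = ∑ x, g x * walsh T (flipAt i x) := by
    simpa using sum_comp_flipAt i fun x => g x * walsh T (flipAt i x)
  simp only [walshCoeff, sub_mul, sum_sub_distrib, hflip, walsh_flipAt, mul_left_comm _ (ite _ _ _),
    ← mul_sum]
  split_ifs <;> ring

theorem four_mul_sum_sq_walshCoeff_of_mem (g : (Fin n → Bool) → ℤ) (i : Fin n) :
    4 * ∑ T, (if i ∈ T then walshCoeff g T ^ 2 else 0) =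
      2 ^ n * ∑ x, (g x - g (flipAt i x)) ^ 2 := by
  rw [← sum_sq_walshCoeff, mul_sum]
  refine sum_congr rfl fun T _ => ?_
  rw [walshCoeff_sub_flipAt]
  split_ifs <;> ring

def cubeIndicator (S : Finset (Fin n → Bool)) (x : Fin n → Bool) : ℤ :=
  if x ∈ S then 1 else 0

lemma sum_sq_cubeIndicator (S : Finset (Fin n → Bool)) : ∑ x, cubeIndicator S x ^ 2 = #S := by
  simp [cubeIndicator, apply_ite (· ^ 2)]

lemma sum_sq_cubeIndicator_sub_flipAt (S : Finset (Fin n → Bool)) (i : Fin n) :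
    ∑ x, (cubeIndicator S x - cubeIndicator S (flipAt i x)) ^ 2 = 2 * dirBoundary S i := by
  let f : (Fin n → Bool) → ℤ := fun x => if x ∈ S ∧ flipAt i x ∉ S then 1 else 0
  have hpt : ∀ x,
      (cubeIndicator S x - cubeIndicator S (flipAt i x)) ^ 2 = f x + f (flipAt i x) := by
    intro x
    simp only [f, cubeIndicator, flipAt_flipAt]
    split_ifs <;> simp_all
  rw [sum_congr rfl fun x _ => hpt x, sum_add_distrib, sum_comp_flipAt i f]
  simp only [f, sum_boole, dirBoundary]
  ring

theorem two_mul_sum_card_mul_sq_walshCoeff (S : Finset (Fin n → Bool)) :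
    2 * ∑ T, (#T : ℤ) * walshCoeff (cubeIndicator S) T ^ 2 = 2 ^ n * edgeBoundary n S := by
  have hcard : ∀ T : Finset (Fin n), (#T : ℤ) * walshCoeff (cubeIndicator S) T ^ 2 =
      ∑ i, if i ∈ T then walshCoeff (cubeIndicator S) T ^ 2 else 0 := by
    intro T
    rw [sum_ite_mem, univ_inter, sum_const, nsmul_eq_mul]
  have hinf : ∀ i, 2 * ∑ T, (if i ∈ T then walshCoeff (cubeIndicator S) T ^ 2 else 0) =
      2 ^ n * dirBoundary S i := by
    intro i
    have := four_mul_sum_sq_walshCoeff_of_mem (cubeIndicator S) i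
    rw [sum_sq_cubeIndicator_sub_flipAt] at this
    linarith
  simp only [sum_congr rfl fun T _ => hcard T, edgeBoundary_eq_sum_dirBoundary]
  rw [sum_comm, mul_sum, sum_congr rfl fun i _ => hinf i]
  push_cast
  rw [mul_sum]

lemma two_mul_sum_sq_le (c : Finset (Fin n) → ℤ) :
    2 * ∑ T, c T ^ 2 ≤ 2 * c ∅ ^ 2 + ∑ T, (#T : ℤ) * c T ^ 2 + ∑ i, c {i} ^ 2 := by
  have hsingle : ∑ i, c {i} ^ 2 = ∑ T, if #T = 1 then c T ^ 2 else 0 := by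
    rw [← sum_filter, ← powerset_univ, ← powersetCard_eq_filter, powersetCard_one, sum_map]
    rfl
  have hempty : c ∅ ^ 2 = ∑ T, if T = ∅ then c T ^ 2 else 0 := by simp
  rw [hsingle, hempty, mul_sum, mul_sum, ← sum_add_distrib, ← sum_add_distrib]
  refine sum_le_sum fun T _ => ?_
  have hT := sq_nonneg (c T)
  rcases Nat.lt_or_ge #T 2 with h | h
  · interval_cases hc : #T
    · simp [card_eq_zero.mp hc]
    · simp [Finset.card_ne_zero.mp (by omega : #T ≠ 0) |>.ne_empty]
      linarith
  · have : T ≠ ∅ := by rintro rfl; simp at h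
    simp only [this, if_false, show #T ≠ 1 by omega]
    have : (2 : ℤ) ≤ #T := by exact_mod_cast h
    nlinarith

end Walsh

section Imbalance

variable {n : ℕ}

def imbalance (S : Finset (Fin n → Bool)) (i : Fin n) : ℤ :=
  #(S ∩ halfPlane n i false) - #(S ∩ halfPlane n i true)

lemma walshCoeff_cubeIndicator_empty (S : Finset (Fin n → Bool)) :
    walshCoeff (cubeIndicator S) ∅ = #S := by
  simp [walshCoeff, walsh, cubeIndicator]

lemma walshCoeff_cubeIndicator_singleton (S : Finset (Fin n → Bool)) (i : Fin n) :
    walshCoeff (cubeIndicator S) {i} = imbalance S i := by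
  simp [walshCoeff, walsh, cubeIndicator, imbalance, halfPlane, sum_ite, inter_comm S]
  ring

theorem four_mul_card_mul_sub_card_le (S : Finset (Fin n → Bool)) :
    4 * #S * (2 ^ n - #S) ≤ 2 ^ n * edgeBoundary n S + 2 * ∑ i, imbalance S i ^ 2 := by
  have hM := two_mul_sum_sq_le (walshCoeff (cubeIndicator S))
  rw [sum_sq_walshCoeff, sum_sq_cubeIndicator, walshCoeff_cubeIndicator_empty] at hM
  simp only [walshCoeff_cubeIndicator_singleton] at hM
  have hE := two_mul_sum_card_mul_sq_walshCoeff S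
  linarith

lemma abs_imbalance_le_dirBoundary (S : Finset (Fin n → Bool)) (i : Fin n) :
    |imbalance S i| ≤ dirBoundary S i := by
  obtain ⟨m, rfl⟩ : ∃ m, n = m + 1 := ⟨n - 1, by have := i.pos; omega⟩
  have h₁ := le_card_sdiff (gPre m i true S) (gPre m i false S)
  have h₂ := le_card_sdiff (gPre m i false S) (gPre m i true S)
  rw [imbalance, dirBoundary_self, Fintype.sum_bool, ← card_gPre, ← card_gPre, abs_le]
  simp only [Bool.not_true, Bool.not_false]
  omega

theorem three_mul_two_pow_le_four_mul_edgeBoundary_of_balanced (S : Finset (Fin n → Bool))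
    (hS : 2 * #S = 2 ^ n) (hbal : ∀ i a, 2 ^ n ≤ 6 * #(S ∩ halfPlane n i a)) :
    3 * 2 ^ n ≤ 4 * edgeBoundary n S := by
  have hsq : ∀ i, 6 * imbalance S i ^ 2 ≤ 2 ^ n * dirBoundary S i := by
    intro i
    have h6 : |6 * imbalance S i| ≤ 2 ^ n := by
      have := card_inter_halfPlane_add S i
      have := hbal i false
      have := hbal i true
      rw [imbalance, abs_le]
      constructor <;> zify at * <;> linarith
    calc 6 * imbalance S i ^ 2 = |6 * imbalance S i| * |imbalance S i| := by
          rw [abs_mul, abs_of_pos (by norm_num : (0 : ℤ) < 6), mul_assoc, abs_mul_abs_self, sq]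
      _ ≤ 2 ^ n * dirBoundary S i :=
          mul_le_mul h6 (abs_imbalance_le_dirBoundary S i) (abs_nonneg _) (by positivity)
  have hsum : 6 * ∑ i, imbalance S i ^ 2 ≤ 2 ^ n * edgeBoundary n S := by
    rw [mul_sum, edgeBoundary_eq_sum_dirBoundary, Nat.cast_sum, mul_sum]
    exact sum_le_sum fun i _ => hsq i
  have hF := four_mul_card_mul_sub_card_le S
  have hS' : (2 * #S : ℤ) = 2 ^ n := by exact_mod_cast hS
  have hpos : (0 : ℤ) < 2 ^ n := by positivity
  have : (2 ^ n : ℤ) * (3 * 2 ^ n) ≤ 2 ^ n * (4 * edgeBoundary n S) := by nlinarith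
  exact_mod_cast le_of_mul_le_mul_left this hpos

end Imbalance

/-- For `n ≥ 5`, if `|S| = 2^{n−1}` and `Type(S) > 2^{n−3}`,
then `θ(n,S) ≥ 3·2^{n−2}`. -/
theorem theta_lower_bound_half_big_type (n : ℕ) (hn : 5 ≤ n)
    (S : Finset (Fin n → Bool)) (hcard : S.card = 2^(n-1))
    (htype : typeOf n S > 2^(n-3)) :
    edgeBoundary n S ≥ 3 * 2^(n-2) := by
  obtain ⟨p, rfl⟩ : ∃ p, n = p + 3 := ⟨n - 3, by omega⟩
  rw [show p + 3 - 1 = p + 2 by omega] at hcard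
  rw [show p + 3 - 3 = p by omega] at htype
  rw [show p + 3 - 2 = p + 1 by omega, ge_iff_le]
  have hthick : ∀ i a, 2 ^ p ≤ #(S ∩ halfPlane (p + 3) i a) :=
    fun i a => htype.le.trans (typeOf_le S i a)
  by_cases hthin : ∃ i a, 3 * #(S ∩ halfPlane (p + 3) i a) < 4 * 2 ^ p
  · obtain ⟨i, a, h⟩ := hthin
    exact three_mul_two_pow_le_edgeBoundary_of_thin_halfPlane p S hcard i a (hthick i a) (by omega)
  · simp only [not_exists, not_lt] at hthin
    have := three_mul_two_pow_le_four_mul_edgeBoundary_of_balanced S (by rw [hcard]; ring)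
      fun i a => by have := hthin i a; rw [pow_add]; omega
    rw [pow_add] at this ⊢
    omega
end

section
/- Let n ≥ 3 and let S ⊆ V(Q_n) with |S| = 2^{n−1} and Type(S) = t < 2^{n−3}. Then there exists a unique half plane H of Q_n with |S ∩ H| = t, and for every half plane H′ ≠ H one has |S ∩ H′| ≥ 2^{n−2} − t > 2^{n−3}. -/
/-!
Two distinct half planes `H ≠ H'` leave out at most a quarter of the cube (nothing at all when
`H' = Hᶜ`), so `|S| ≤ |S ∩ H| + |S ∩ H'| + 2^(n-2)`. For `|S| = 2^(n-1)` and `|S ∩ H| = t` this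
gives `|S ∩ H'| ≥ 2^(n-2) - t`, which exceeds `t` when `t < 2^(n-3)`; hence a half plane realising
the type is unique.
-/

open Finset

theorem card_filter_apply_eq_and_apply_eq {ι α : Type*} [Fintype ι] [DecidableEq ι] [Fintype α]
    [DecidableEq α] {i j : ι} (hij : i ≠ j) (a b : α) :
    #{x : ι → α | x i = a ∧ x j = b} = Fintype.card α ^ (Fintype.card ι - 2) := by
  set s : ι → Finset α := fun k => if k = i then {a} else if k = j then {b} else univ
  have hs : ({x : ι → α | x i = a ∧ x j = b} : Finset (ι → α)) = Fintype.piFinset s := by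
    ext x
    simp only [mem_filter, mem_univ, true_and, Fintype.mem_piFinset, s]
    constructor
    · rintro ⟨rfl, rfl⟩ k
      split_ifs with hki hkj
      · exact mem_singleton.2 (congrArg x hki)
      · exact mem_singleton.2 (congrArg x hkj)
      · exact mem_univ _
    · intro h
      exact ⟨by simpa using h i, by simpa [hij.symm] using h j⟩
  have hj : j ∈ (univ : Finset ι).erase i := mem_erase.2 ⟨hij.symm, mem_univ j⟩
  rw [hs, Fintype.card_piFinset, ← mul_prod_erase _ _ (mem_univ i), ← mul_prod_erase _ _ hj,
    prod_congr rfl (g := fun _ => Fintype.card α), prod_const]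
  · simp [s, hij.symm, card_erase_of_mem hj, Finset.card_univ, Nat.sub_sub]
  · intro k hk
    simp only [mem_erase] at hk
    simp [s, hk.1, hk.2.1]

theorem card_compl_union_halfPlane_le {n : ℕ} {i j : Fin n} {a b : Bool} (h : (i, a) ≠ (j, b)) :
    #(halfPlane n i a ∪ halfPlane n j b)ᶜ ≤ 2 ^ (n - 2) := by
  have hcompl : (halfPlane n i a ∪ halfPlane n j b)ᶜ =
      ({x | x i = !a ∧ x j = !b} : Finset (Fin n → Bool)) := by
    ext x
    cases a <;> cases b <;> simp [halfPlane]
  rw [hcompl]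
  by_cases hij : i = j
  · subst hij
    have hba : b = !a := by
      cases a <;> cases b <;> simp_all
    rw [hba, Bool.not_not, filter_false_of_mem fun x _ ⟨hna, ha⟩ => by simp [ha] at hna]
    simp
  · simpa using (card_filter_apply_eq_and_apply_eq hij (!a) (!b)).le

theorem card_le_card_inter_halfPlane_add {n : ℕ} (S : Finset (Fin n → Bool)) {i j : Fin n}
    {a b : Bool} (h : (i, a) ≠ (j, b)) :
    #S ≤ #(S ∩ halfPlane n i a) + #(S ∩ halfPlane n j b) + 2 ^ (n - 2) := by
  have hcover : S ⊆ (S ∩ halfPlane n i a) ∪ (S ∩ halfPlane n j b) ∪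
      (halfPlane n i a ∪ halfPlane n j b)ᶜ := by
    intro x hx
    by_cases hi : x ∈ halfPlane n i a <;> by_cases hj : x ∈ halfPlane n j b <;> simp [*]
  calc #S ≤ #((S ∩ halfPlane n i a) ∪ (S ∩ halfPlane n j b) ∪
        (halfPlane n i a ∪ halfPlane n j b)ᶜ) := card_le_card hcover
    _ ≤ #(S ∩ halfPlane n i a) + #(S ∩ halfPlane n j b) +
        #(halfPlane n i a ∪ halfPlane n j b)ᶜ :=
      (card_union_le _ _).trans (Nat.add_le_add_right (card_union_le _ _) _)
    _ ≤ _ := Nat.add_le_add_left (card_compl_union_halfPlane_le h) _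

theorem exists_card_inter_halfPlane_eq_typeOf {n : ℕ} (hn : 0 < n) (S : Finset (Fin n → Bool)) :
    ∃ (i : Fin n) (a : Bool), #(S ∩ halfPlane n i a) = typeOf n S :=
  Nat.sInf_mem (s := {m | ∃ (i : Fin n) (a : Bool), #(S ∩ halfPlane n i a) = m})
    ⟨_, ⟨0, hn⟩, true, rfl⟩

/-- Guu's unique half plane lemma. -/
theorem unique_half_plane (n t : ℕ) (hn : 3 ≤ n) (S : Finset (Fin n → Bool))
    (hcard : S.card = 2^(n-1)) (htype : typeOf n S = t) (ht : t < 2^(n-3)) :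
    (∃! H : Finset (Fin n → Bool),
        (∃ (i : Fin n) (a : Bool), H = halfPlane n i a) ∧ (S ∩ H).card = t) ∧
    (∀ H H' : Finset (Fin n → Bool),
        (∃ (i : Fin n) (a : Bool), H = halfPlane n i a) →
        (∃ (i : Fin n) (a : Bool), H' = halfPlane n i a) →
        (S ∩ H).card = t → H' ≠ H →
        (S ∩ H').card ≥ 2^(n-2) - t ∧ 2^(n-2) - t > 2^(n-3)) := by
  have hpow₁ : 2 ^ (n - 1) = 2 * 2 ^ (n - 2) := by
    rw [← pow_succ']; congr 1; omega
  have hpow₂ : 2 ^ (n - 2) = 2 * 2 ^ (n - 3) := by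
    rw [← pow_succ']; congr 1; omega
  have hfar : ∀ i a j b, #(S ∩ halfPlane n i a) = t → halfPlane n j b ≠ halfPlane n i a →
      2 ^ (n - 2) - t ≤ #(S ∩ halfPlane n j b) := by
    intro i a j b hia hne
    have hpair : (i, a) ≠ (j, b) := by
      rintro ⟨⟩
      exact hne rfl
    have := card_le_card_inter_halfPlane_add S hpair
    omega
  obtain ⟨i, a, hia⟩ := exists_card_inter_halfPlane_eq_typeOf (by omega) S
  rw [htype] at hia
  refine ⟨⟨halfPlane n i a, ⟨⟨i, a, rfl⟩, hia⟩, ?_⟩, ?_⟩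
  · rintro _ ⟨⟨j, b, rfl⟩, hjb⟩
    by_contra hne
    have := hfar i a j b hia hne
    omega
  · rintro _ _ ⟨i, a, rfl⟩ ⟨j, b, rfl⟩ hia hne
    exact ⟨hfar i a j b hia hne, by omega⟩
end
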